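/- arXiv:2206.00664 — 2 statements merged into one kernel-verified Lean document; each statement's English description precedes it below -/
import Mathlib

section
/- Let N ≥ 2 and fix an index i. Then for every ξ' ∈ ℝ^d the spectral norm of the Jacobian of the Hopfield update rule satisfies ‖Df(ξ')‖₂ ≤ 2 β N M² (N − 1) · exp(−β (Δ_i − 2 M ‖ξ' − x_i‖)). -/
open scoped BigOperators RealInnerProductSpace

/-- softmax(v)_j = exp(v_j) / Σ_k exp(v_k). -/
noncomputable def softmax {N : ℕ} (v : Fin N → ℝ) : Fin N → ℝ :=
  fun j => Real.exp (v j) / ∑ k, Real.exp (v k)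

/-- The Hopfield update rule f(ξ) = X softmax(β Xᵀ ξ) = Σ_i softmax(β ⟪x_i, ξ⟫)_i • x_i. -/
noncomputable def hopfieldUpdate {d N : ℕ} (x : Fin N → EuclideanSpace ℝ (Fin d))
    (β : ℝ) (ξ : EuclideanSpace ℝ (Fin d)) : EuclideanSpace ℝ (Fin d) :=
  ∑ i, softmax (fun j => β * ⟪x j, ξ⟫) i • x i

/-!
Writing p = softmax(β Xᵀ ξ), the Jacobian β X (diag p − p pᵀ) Xᵀ is the double sum
Σ_{j,k} β p_j p_k · x_j (x_j − x_k)ᵀ, whose diagonal terms vanish and whose off-diagonal terms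
have norm at most β p_j p_k · 2M · M. Of two distinct indices at least one differs from i, and
for m ≠ i the separation gives p_m ≤ exp(β ⟪x_m − x_i, ξ⟫) ≤ exp(−β (Δ_i − 2M ‖ξ − x_i‖));
since the other factor is at most 1, this bounds p_j p_k, and there are N (N − 1) such terms.
-/

open Finset Real

section Softmax

variable {N : ℕ}

theorem exp_le_sum_exp (v : Fin N → ℝ) (j : Fin N) : exp (v j) ≤ ∑ k, exp (v k) :=
  single_le_sum (fun k _ => (exp_pos (v k)).le) (mem_univ j)

theorem softmax_nonneg (v : Fin N → ℝ) (j : Fin N) : 0 ≤ softmax v j :=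
  div_nonneg (exp_pos _).le (sum_nonneg fun k _ => (exp_pos (v k)).le)

theorem softmax_le_one (v : Fin N → ℝ) (j : Fin N) : softmax v j ≤ 1 :=
  div_le_one_of_le₀ (exp_le_sum_exp v j) (sum_nonneg fun k _ => (exp_pos (v k)).le)

theorem softmax_le_exp_sub (v : Fin N → ℝ) (j i : Fin N) : softmax v j ≤ exp (v j - v i) := by
  rw [exp_sub]
  exact div_le_div_of_nonneg_left (exp_pos _).le (exp_pos _) (exp_le_sum_exp v i)

theorem softmax_mul_softmax_le {v : Fin N → ℝ} {i : Fin N} {ε : ℝ}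
    (h : ∀ m, m ≠ i → softmax v m ≤ ε) {j k : Fin N} (hjk : j ≠ k) :
    softmax v j * softmax v k ≤ ε := by
  rcases eq_or_ne j i with rfl | hj
  · calc softmax v j * softmax v k ≤ 1 * ε :=
          mul_le_mul (softmax_le_one v j) (h k hjk.symm) (softmax_nonneg v k) zero_le_one
      _ = ε := one_mul ε
  · calc softmax v j * softmax v k ≤ ε * 1 :=
          mul_le_mul (h j hj) (softmax_le_one v k) (softmax_nonneg v k)
            ((softmax_nonneg v j).trans (h j hj))
      _ = ε := mul_one ε

theorem hasFDerivAt_softmax {E : Type*} [NormedAddCommGroup E] [NormedSpace ℝ E]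
    {v : Fin N → E → ℝ} {v' : Fin N → E →L[ℝ] ℝ} {ξ : E} (hv : ∀ k, HasFDerivAt (v k) (v' k) ξ)
    (j : Fin N) :
    HasFDerivAt (fun y => softmax (fun k => v k y) j)
      (∑ k, (softmax (fun k => v k ξ) j * softmax (fun k => v k ξ) k) • (v' j - v' k)) ξ := by
  set S := ∑ k, exp (v k ξ) with hS_def
  have hS : S ≠ 0 := (sum_pos (fun k _ => exp_pos (v k ξ)) ⟨j, mem_univ j⟩).ne'
  have hexp : ∀ k, HasFDerivAt (fun y => exp (v k y)) (exp (v k ξ) • v' k) ξ :=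
    fun k => (hv k).exp
  have hinv : HasFDerivAt (fun y => (∑ k, exp (v k y))⁻¹)
      (-(S ^ 2)⁻¹ • ∑ k, exp (v k ξ) • v' k) ξ :=
    (hasDerivAt_inv hS).comp_hasFDerivAt ξ (HasFDerivAt.fun_sum fun k _ => hexp k)
  refine ((hexp j).mul hinv).congr_fderiv ?_
  ext h
  simp only [softmax, ← hS_def, add_apply, smul_apply, _root_.sum_apply, sub_apply, smul_eq_mul,
    mul_sub, sum_sub_distrib, ← sum_mul, ← mul_sum, ← sum_div]
  have hterm : ∀ k, exp (v j ξ) / S * (exp (v k ξ) / S) * v' k h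
      = exp (v j ξ) / S ^ 2 * (exp (v k ξ) * v' k h) := fun k => by field_simp
  rw [sum_congr rfl fun k _ => hterm k, ← mul_sum]
  field_simp
  ring

end Softmax

theorem norm_sum_sum_le_of_diag_eq_zero {ι E : Type*} [Fintype ι] [SeminormedAddCommGroup E]
    (a : ι → ι → E) {C : ℝ} (hdiag : ∀ j, a j j = 0) (hoff : ∀ j k, j ≠ k → ‖a j k‖ ≤ C) :
    ‖∑ j, ∑ k, a j k‖ ≤ Fintype.card ι * (Fintype.card ι - 1) * C := by
  classical
  have hrow : ∀ j, ‖∑ k, a j k‖ ≤ (Fintype.card ι - 1) * C := by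
    intro j
    rw [← sum_erase univ (hdiag j)]
    calc ‖∑ k ∈ univ.erase j, a j k‖ ≤ ∑ k ∈ univ.erase j, C :=
          norm_sum_le_of_le _ fun k hk => hoff j k (ne_of_mem_erase hk).symm
      _ = (Fintype.card ι - 1) * C := by
          rw [sum_const, card_erase_of_mem (mem_univ j), card_univ, nsmul_eq_mul,
            Nat.cast_pred (Fintype.card_pos_iff.2 ⟨j⟩)]
  calc ‖∑ j, ∑ k, a j k‖ ≤ ∑ _j : ι, (Fintype.card ι - 1) * C :=
        norm_sum_le_of_le _ fun j _ => hrow j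
    _ = Fintype.card ι * (Fintype.card ι - 1) * C := by
        rw [sum_const, card_univ, nsmul_eq_mul, mul_assoc]

section InnerProductSpace

variable {E : Type*} [NormedAddCommGroup E] [InnerProductSpace ℝ E]

theorem real_inner_sub_real_inner_le {a b ξ : E} {M Δ : ℝ} (ha : ‖a‖ ≤ M) (hb : ‖b‖ ≤ M)
    (hΔ : Δ ≤ ⟪b, b⟫ - ⟪b, a⟫) : ⟪a, ξ⟫ - ⟪b, ξ⟫ ≤ 2 * M * ‖ξ - b‖ - Δ := by
  have hsplit : ⟪a, ξ⟫ - ⟪b, ξ⟫ = ⟪a - b, ξ - b⟫ - (⟪b, b⟫ - ⟪b, a⟫) := by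
    simp only [inner_sub_left, inner_sub_right, real_inner_comm a b]
    ring
  have hcs : ⟪a - b, ξ - b⟫ ≤ 2 * M * ‖ξ - b‖ :=
    (real_inner_le_norm _ _).trans
      (mul_le_mul_of_nonneg_right (by linarith [norm_sub_le_of_le ha hb]) (norm_nonneg _))
  linarith

theorem softmax_le_exp_of_separation {N : ℕ} {x : Fin N → E} {β M Δ : ℝ} (hβ : 0 ≤ β)
    (hM : ∀ j, ‖x j‖ ≤ M) {i m : Fin N} (hΔ : Δ ≤ ⟪x i, x i⟫ - ⟪x i, x m⟫) (ξ : E) :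
    softmax (fun j => β * ⟪x j, ξ⟫) m ≤ exp (-β * (Δ - 2 * M * ‖ξ - x i‖)) := by
  refine (softmax_le_exp_sub _ m i).trans (exp_le_exp.2 ?_)
  have := mul_le_mul_of_nonneg_left (real_inner_sub_real_inner_le (ξ := ξ) (hM m) (hM i) hΔ) hβ
  linarith

end InnerProductSpace

theorem hasFDerivAt_hopfieldUpdate {d N : ℕ} (x : Fin N → EuclideanSpace ℝ (Fin d)) (β : ℝ)
    (ξ : EuclideanSpace ℝ (Fin d)) :
    HasFDerivAt (hopfieldUpdate x β)
      (∑ j, ∑ k, (β * softmax (fun m => β * ⟪x m, ξ⟫) j * softmax (fun m => β * ⟪x m, ξ⟫) k) •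
        (innerSL ℝ (x j - x k)).smulRight (x j)) ξ := by
  have hv : ∀ k, HasFDerivAt (fun y => β * ⟪x k, y⟫) (β • innerSL ℝ (x k)) ξ :=
    fun k => (innerSL ℝ (x k)).hasFDerivAt.const_mul β
  refine (HasFDerivAt.fun_sum fun j _ =>
    (hasFDerivAt_softmax hv j).smul_const (x j)).congr_fderiv (ContinuousLinearMap.ext fun h => ?_)
  simp only [_root_.sum_apply, ContinuousLinearMap.smulRight_apply, smul_apply, sub_apply,
    coe_innerSL_apply, smul_eq_mul, sum_smul, smul_smul, inner_sub_left]
  refine sum_congr rfl fun j _ => sum_congr rfl fun k _ => ?_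
  ring_nf

theorem jacobian_spectral_norm_bound_general
    {d N : ℕ} (x : Fin N → EuclideanSpace ℝ (Fin d)) (β M Δ : ℝ)
    (hβ : 0 < β)
    (hM : IsGreatest (Set.range fun i => ‖x i‖) M)
    (i : Fin N)
    (hΔ : IsLeast {v : ℝ | ∃ j, j ≠ i ∧ v = ⟪x i, x i⟫ - ⟪x i, x j⟫} Δ)
    (ξ' : EuclideanSpace ℝ (Fin d)) :
    ‖fderiv ℝ (hopfieldUpdate x β) ξ'‖
      ≤ 2 * β * N * M ^ 2 * ((N : ℝ) - 1) *
          Real.exp (-β * (Δ - 2 * M * ‖ξ' - x i‖)) := by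
  set p := softmax (fun m => β * ⟪x m, ξ'⟫)
  set ε := exp (-β * (Δ - 2 * M * ‖ξ' - x i‖))
  have hxM : ∀ j, ‖x j‖ ≤ M := fun j => hM.2 ⟨j, rfl⟩
  have hM0 : 0 ≤ M := (norm_nonneg _).trans (hxM i)
  have hpε : ∀ m, m ≠ i → p m ≤ ε := fun m hm =>
    softmax_le_exp_of_separation hβ.le hxM (hΔ.2 ⟨m, hm, rfl⟩) ξ'
  have hterm : ∀ j k, j ≠ k →
      ‖(β * p j * p k) • (innerSL ℝ (x j - x k)).smulRight (x j)‖ ≤ β * ε * (2 * M) * M := by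
    intro j k hjk
    have hp_nonneg : 0 ≤ p j * p k := mul_nonneg (softmax_nonneg _ j) (softmax_nonneg _ k)
    rw [norm_smul, ContinuousLinearMap.norm_smulRight_apply, innerSL_apply_norm, mul_assoc β,
      Real.norm_of_nonneg (mul_nonneg hβ.le hp_nonneg), ← mul_assoc]
    gcongr
    · exact softmax_mul_softmax_le hpε hjk
    · exact norm_sub_le_of_le (hxM j) (hxM k) |>.trans_eq (two_mul M).symm
    · exact hxM j
  rw [(hasFDerivAt_hopfieldUpdate x β ξ').fderiv]
  refine (norm_sum_sum_le_of_diag_eq_zero _ (fun j => by simp) hterm).trans_eq ?_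
  rw [Fintype.card_fin]
  ring

/-- For N ≥ 2 and index i, for every ξ' the spectral norm of the Jacobian of the
Hopfield update rule satisfies ‖Df(ξ')‖₂ ≤ 2 β N M² (N − 1) · exp(−β (Δ_i − 2 M ‖ξ' − x_i‖)).
(The Jacobian Df(ξ') is the Fréchet derivative of f at ξ', whose operator norm on Euclidean
space is the spectral norm.) -/
theorem jacobian_spectral_norm_bound
    {d N : ℕ} (hN : 2 ≤ N) (x : Fin N → EuclideanSpace ℝ (Fin d)) (β M Δ : ℝ)
    (hβ : 0 < β)
    (hM : IsGreatest (Set.range fun i => ‖x i‖) M)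
    (i : Fin N)
    (hΔ : IsLeast {v : ℝ | ∃ j, j ≠ i ∧ v = ⟪x i, x i⟫ - ⟪x i, x j⟫} Δ)
    (ξ' : EuclideanSpace ℝ (Fin d)) :
    ‖fderiv ℝ (hopfieldUpdate x β) ξ'‖
      ≤ 2 * β * N * M ^ 2 * ((N : ℝ) - 1) *
          Real.exp (-β * (Δ - 2 * M * ‖ξ' - x i‖)) :=
  jacobian_spectral_norm_bound_general x β M Δ hβ hM i hΔ ξ'
end

section
/- Let N ≥ 2, M > 0, fix an index i, and suppose the pattern x_i is well-separated, i.e. Δ_i ≥ 2/(β N) + β^{−1} log(2 (N − 1) N β M²). Then there exists a fixed point x_i* of the Hopfield update rule in the closed ball of radius 1/(β N M) centered at x_i, i.e. f(x_i*) = x_i* and ‖x_i* − x_i‖ ≤ 1/(β N M). -/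
open scoped BigOperators RealInnerProductSpace

/-!
On the ball `B` of radius `r = 1 / (β N M)` around `x i`, well-separation gives every competitor
`j ≠ i` a logit gap `β ⟪x i, ξ⟫ - β ⟪x j, ξ⟫ ≥ log (2 (N - 1) N β M²)`, so the softmax mass off `i`
is at most `s = 1 / (1 + 2 N β M²)`. As `f ξ - x i = ∑ⱼ pⱼ (x j - x i)`, this gives
`‖f ξ - x i‖ ≤ 2 M s ≤ r`: `f` maps `B` into itself. Along a segment `ξ + t η` the weights satisfy
`pⱼ' = pⱼ (bⱼ - ∑ₖ pₖ bₖ)` with `bⱼ = β ⟪x j, η⟫`, which bounds the derivative of `f` on `B` by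
`4 β M² s ‖η‖` with `4 β M² s < 1`, so `f` is a contraction of the complete set `B` and Banach's
fixed point theorem applies.
-/

open Finset Set Metric

theorem exists_fixedPoint_of_lipschitzOnWith {α : Type*} [MetricSpace α] {f : α → α}
    {s : Set α} {K : NNReal} (hs : IsComplete s) (hne : s.Nonempty) (hf : MapsTo f s s)
    (hK : K < 1) (hL : LipschitzOnWith K f s) : ∃ y ∈ s, f y = y := by
  obtain ⟨x, hx⟩ := hne
  obtain ⟨y, hy, hfix, -⟩ := ContractingWith.exists_fixedPoint' hs hf
    ⟨hK, hL.mapsToRestrict hf⟩ hx (edist_ne_top _ _)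
  exact ⟨y, hy, hfix⟩

theorem real_inner_add_sub_le {F : Type*} [NormedAddCommGroup F] [InnerProductSpace ℝ F]
    (u w ξ : F) : ⟪w, ξ⟫ + (⟪u, u⟫ - ⟪u, w⟫) ≤ ⟪u, ξ⟫ + ‖w - u‖ * ‖ξ - u‖ := by
  have h : ⟪w - u, ξ - u⟫ = ⟪w, ξ⟫ + (⟪u, u⟫ - ⟪u, w⟫) - ⟪u, ξ⟫ := by
    simp only [inner_sub_left, inner_sub_right, real_inner_comm w u]
    ring
  linarith [real_inner_le_norm (w - u) (ξ - u)]

theorem norm_sum_smul_sub_le {E : Type*} [NormedAddCommGroup E] [NormedSpace ℝ E] {ι : Type*}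
    [Fintype ι] [DecidableEq ι] (w : ι → ℝ) (y : ι → E) (i : ι) {R : ℝ}
    (hR : ∀ j, ‖y j - y i‖ ≤ R) :
    ‖∑ j, w j • (y j - y i)‖ ≤ (∑ j ∈ univ.erase i, |w j|) * R := by
  rw [← sum_erase_add _ _ (mem_univ i), sub_self, smul_zero, add_zero, sum_mul]
  refine (norm_sum_le _ _).trans (sum_le_sum fun j _ => ?_)
  rw [norm_smul, Real.norm_eq_abs]
  exact mul_le_mul_of_nonneg_left (hR j) (abs_nonneg _)

theorem sum_smul_sub {E : Type*} [AddCommGroup E] [Module ℝ E] {ι : Type*} [Fintype ι]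
    (w : ι → ℝ) (y : ι → E) (z : E) :
    ∑ j, w j • (y j - z) = ∑ j, w j • y j - (∑ j, w j) • z := by
  simp only [smul_sub, sum_sub_distrib, sum_smul]

section Softmax

variable {N : ℕ}

theorem sum_exp_pos (v : Fin N → ℝ) (i : Fin N) : 0 < ∑ k, Real.exp (v k) :=
  sum_pos (fun k _ => Real.exp_pos (v k)) ⟨i, mem_univ i⟩

theorem softmax_pos (v : Fin N → ℝ) (j : Fin N) : 0 < softmax v j :=
  div_pos (Real.exp_pos _) (sum_exp_pos v j)

theorem sum_softmax [NeZero N] (v : Fin N → ℝ) : ∑ j, softmax v j = 1 := by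
  simp only [softmax, ← sum_div, div_self (sum_exp_pos v 0).ne']

theorem sum_erase_softmax_le_of_gap (v : Fin N → ℝ) (i : Fin N) {δ : ℝ}
    (hgap : ∀ j ≠ i, v j + δ ≤ v i) :
    ∑ j ∈ univ.erase i, softmax v j ≤ ((N : ℝ) - 1) / ((N : ℝ) - 1 + Real.exp δ) := by
  set T := ∑ j ∈ univ.erase i, Real.exp (v j)
  have hT : 0 ≤ T := sum_nonneg fun j _ => (Real.exp_pos _).le
  have hTδ : T * Real.exp δ ≤ ((N : ℝ) - 1) * Real.exp (v i) := by
    calc T * Real.exp δ = ∑ j ∈ univ.erase i, Real.exp (v j + δ) := by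
          simp only [T, sum_mul, Real.exp_add]
      _ ≤ ∑ _j ∈ univ.erase i, Real.exp (v i) :=
          sum_le_sum fun j hj => Real.exp_le_exp.2 (hgap j (ne_of_mem_erase hj))
      _ = ((N : ℝ) - 1) * Real.exp (v i) := by
          rw [sum_const, card_erase_of_mem (mem_univ i), card_univ, Fintype.card_fin,
            nsmul_eq_mul, Nat.cast_pred i.pos]
  have hN : (1 : ℝ) ≤ N := by exact_mod_cast i.pos
  have hZ : ∑ k, Real.exp (v k) = T + Real.exp (v i) := (sum_erase_add _ _ (mem_univ i)).symm
  simp only [softmax, ← sum_div, hZ]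
  rw [div_le_div_iff₀ (by positivity) (by positivity)]
  nlinarith

theorem abs_sub_sum_softmax_mul_le [NeZero N] (v b : Fin N → ℝ) (j : Fin N) {D : ℝ}
    (hD : ∀ k, |b j - b k| ≤ D) : |b j - ∑ k, softmax v k * b k| ≤ D := by
  have h : b j - ∑ k, softmax v k * b k = ∑ k, softmax v k * (b j - b k) := by
    simp only [mul_sub, sum_sub_distrib, ← sum_mul, sum_softmax, one_mul]
  calc |b j - ∑ k, softmax v k * b k| ≤ ∑ k, |softmax v k * (b j - b k)| :=
        h ▸ abs_sum_le_sum_abs _ _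
    _ ≤ ∑ k, softmax v k * D := by
        gcongr with k
        rw [abs_mul, abs_of_pos (softmax_pos v k)]
        exact mul_le_mul_of_nonneg_left (hD k) (softmax_pos v k).le
    _ = D := by rw [← sum_mul, sum_softmax, one_mul]

theorem hasDerivAt_softmax_line (a b : Fin N → ℝ) (j : Fin N) (t : ℝ) :
    HasDerivAt (fun t => softmax (a + t • b) j)
      (softmax (a + t • b) j * (b j - ∑ k, softmax (a + t • b) k * b k)) t := by
  have he : ∀ k, HasDerivAt (fun t => Real.exp (a k + t * b k))
      (Real.exp (a k + t * b k) * b k) t := fun k =>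
    ((hasDerivAt_mul_const (b k)).const_add (a k)).exp
  have hfun : (fun t => softmax (a + t • b) j) =
      fun t => Real.exp (a j + t * b j) / ∑ k, Real.exp (a k + t * b k) := by
    ext t; simp [softmax]
  rw [hfun]
  refine ((he j).div (HasDerivAt.fun_sum fun k _ => he k) (sum_exp_pos _ j).ne').congr_deriv ?_
  have hZ := (sum_exp_pos (a + t • b) j).ne'
  simp only [softmax, Pi.add_apply, Pi.smul_apply, smul_eq_mul, div_mul_eq_mul_div,
    ← sum_div] at hZ ⊢
  field_simp

theorem norm_sum_softmax_smul_sub_le {E : Type*} [NormedAddCommGroup E] [NormedSpace ℝ E]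
    [NeZero N] (a b : Fin N → ℝ) (y : Fin N → E) (i : Fin N) {s D R : ℝ}
    (hs : ∀ t ∈ Icc (0 : ℝ) 1, ∑ j ∈ univ.erase i, softmax (a + t • b) j ≤ s)
    (hD : ∀ j k, |b j - b k| ≤ D) (hR : ∀ j, ‖y j - y i‖ ≤ R) :
    ‖∑ j, softmax (a + b) j • y j - ∑ j, softmax a j • y j‖ ≤ s * D * R := by
  set w : ℝ → Fin N → ℝ := fun t j =>
    softmax (a + t • b) j * (b j - ∑ k, softmax (a + t • b) k * b k)
  have hderiv : ∀ t, HasDerivAt (fun t => ∑ j, softmax (a + t • b) j • y j)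
      (∑ j, w t j • y j) t := fun t =>
    HasDerivAt.fun_sum fun j _ => (hasDerivAt_softmax_line a b j t).smul_const (y j)
  have hw : ∀ t, ∑ j, w t j = 0 := fun t => by
    simp only [w, mul_sub, sum_sub_distrib, ← sum_mul, sum_softmax, one_mul]
    exact sub_self _
  have hR0 : 0 ≤ R := by simpa using hR i
  have hD0 : 0 ≤ D := by simpa using hD i i
  have hbound : ∀ t ∈ Icc (0 : ℝ) 1, ‖∑ j, w t j • y j‖ ≤ s * D * R := fun t ht => by
    calc ‖∑ j, w t j • y j‖ = ‖∑ j, w t j • (y j - y i)‖ := by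
          rw [sum_smul_sub, hw, zero_smul, sub_zero]
      _ ≤ (∑ j ∈ univ.erase i, |w t j|) * R := norm_sum_smul_sub_le _ y i hR
      _ ≤ (∑ j ∈ univ.erase i, softmax (a + t • b) j * D) * R := by
          gcongr with j
          rw [abs_mul, abs_of_pos (softmax_pos _ j)]
          exact mul_le_mul_of_nonneg_left (abs_sub_sum_softmax_mul_le _ b j (hD j))
            (softmax_pos _ j).le
      _ ≤ s * D * R := by
          rw [← sum_mul]
          gcongr
          exact hs t ht
  simpa using norm_image_sub_le_of_norm_deriv_le_segment_01'
    (fun t _ => (hderiv t).hasDerivWithinAt) fun t ht => hbound t (Ico_subset_Icc_self ht)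

end Softmax

section Hopfield

variable {d N : ℕ} {x : Fin N → EuclideanSpace ℝ (Fin d)} {β M : ℝ}

theorem norm_sub_le_two_mul (hx : ∀ j, ‖x j‖ ≤ M) (j k : Fin N) : ‖x j - x k‖ ≤ 2 * M :=
  (norm_sub_le _ _).trans (by linarith [hx j, hx k])

theorem norm_hopfieldUpdate_sub_le [NeZero N] (hx : ∀ j, ‖x j‖ ≤ M) (i : Fin N)
    (ξ : EuclideanSpace ℝ (Fin d)) :
    ‖hopfieldUpdate x β ξ - x i‖ ≤
      (∑ j ∈ univ.erase i, softmax (fun j => β * ⟪x j, ξ⟫) j) * (2 * M) := by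
  have h : hopfieldUpdate x β ξ - x i =
      ∑ j, softmax (fun j => β * ⟪x j, ξ⟫) j • (x j - x i) := by
    rw [sum_smul_sub, sum_softmax, one_smul, hopfieldUpdate]
  rw [h]
  refine (norm_sum_smul_sub_le _ x i fun j => norm_sub_le_two_mul hx j i).trans_eq ?_
  simp only [abs_of_pos (softmax_pos _ _)]

theorem lipschitzOnWith_hopfieldUpdate [NeZero N] (hx : ∀ j, ‖x j‖ ≤ M) (hβ : 0 ≤ β)
    (i : Fin N) {S : Set (EuclideanSpace ℝ (Fin d))} (hS : Convex ℝ S) {s : ℝ}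
    (hs : ∀ ξ ∈ S, ∑ j ∈ univ.erase i, softmax (fun j => β * ⟪x j, ξ⟫) j ≤ s) :
    LipschitzOnWith (Real.toNNReal (4 * β * M ^ 2 * s)) (hopfieldUpdate x β) S := by
  refine LipschitzOnWith.of_dist_le' fun ξ' hξ' ξ hξ => ?_
  set a : Fin N → ℝ := fun j => β * ⟪x j, ξ⟫
  set b : Fin N → ℝ := fun j => β * ⟪x j, ξ' - ξ⟫
  have hline : ∀ t : ℝ, a + t • b = fun j => β * ⟪x j, ξ + t • (ξ' - ξ)⟫ := fun t => by
    ext j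
    simp only [a, b, Pi.add_apply, Pi.smul_apply, smul_eq_mul, inner_add_right,
      real_inner_smul_right]
    ring
  have hD : ∀ j k, |b j - b k| ≤ β * (2 * M) * ‖ξ' - ξ‖ := fun j k => by
    rw [show b j - b k = β * ⟪x j - x k, ξ' - ξ⟫ by simp only [b, inner_sub_left]; ring,
      abs_mul, abs_of_nonneg hβ, mul_assoc]
    gcongr
    exact (abs_real_inner_le_norm _ _).trans
      (mul_le_mul_of_nonneg_right (norm_sub_le_two_mul hx j k) (norm_nonneg _))
  have h := norm_sum_softmax_smul_sub_le a b x i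
    (fun t ht => hline t ▸ hs _ (hS.add_smul_sub_mem hξ hξ' ht)) hD
    fun j => norm_sub_le_two_mul hx j i
  rw [← one_smul ℝ b, hline 1, one_smul, add_sub_cancel] at h
  rw [dist_eq_norm, dist_eq_norm]
  calc ‖hopfieldUpdate x β ξ' - hopfieldUpdate x β ξ‖
        ≤ s * (β * (2 * M) * ‖ξ' - ξ‖) * (2 * M) := h
    _ = 4 * β * M ^ 2 * s * ‖ξ' - ξ‖ := by ring

theorem sum_erase_softmax_le_of_mem_closedBall (hx : ∀ j, ‖x j‖ ≤ M) (hβ : 0 ≤ β) {i : Fin N}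
    {Δ r : ℝ} (hΔ : ∀ j ≠ i, Δ ≤ ⟪x i, x i⟫ - ⟪x i, x j⟫) {ξ : EuclideanSpace ℝ (Fin d)}
    (hξ : ξ ∈ closedBall (x i) r) :
    ∑ j ∈ univ.erase i, softmax (fun j => β * ⟪x j, ξ⟫) j ≤
      ((N : ℝ) - 1) / ((N : ℝ) - 1 + Real.exp (β * (Δ - 2 * M * r))) := by
  refine sum_erase_softmax_le_of_gap _ i fun j hj => ?_
  have hclose : ⟪x j, ξ⟫ + Δ ≤ ⟪x i, ξ⟫ + 2 * M * r := by
    have h := real_inner_add_sub_le (x i) (x j) ξ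
    have hdist : ‖x j - x i‖ * ‖ξ - x i‖ ≤ 2 * M * r :=
      mul_le_mul (norm_sub_le_two_mul hx j i) (mem_closedBall_iff_norm.1 hξ) (norm_nonneg _)
        (by linarith [norm_nonneg (x j), hx j])
    linarith [hΔ j hj]
  linarith [mul_le_mul_of_nonneg_left hclose hβ]

theorem mapsTo_hopfieldUpdate_closedBall [NeZero N] (hx : ∀ j, ‖x j‖ ≤ M) (i : Fin N)
    {r s : ℝ}
    (hs : ∀ ξ ∈ closedBall (x i) r,
      ∑ j ∈ univ.erase i, softmax (fun j => β * ⟪x j, ξ⟫) j ≤ s)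
    (hsr : s * (2 * M) ≤ r) :
    MapsTo (hopfieldUpdate x β) (closedBall (x i) r) (closedBall (x i) r) := by
  refine fun ξ hξ => mem_closedBall_iff_norm.2 ((norm_hopfieldUpdate_sub_le hx i ξ).trans ?_)
  have hM : 0 ≤ M := (norm_nonneg _).trans (hx i)
  exact (mul_le_mul_of_nonneg_right (hs ξ hξ) (by positivity)).trans hsr

theorem sum_erase_softmax_le_of_wellSeparated (hN : 2 ≤ N) (hx : ∀ j, ‖x j‖ ≤ M) (hβ : 0 < β)
    (hM : 0 < M) {i : Fin N} {Δ : ℝ} (hΔ : ∀ j ≠ i, Δ ≤ ⟪x i, x i⟫ - ⟪x i, x j⟫)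
    (hsep : 2 / (β * N) + β⁻¹ * Real.log (2 * ((N : ℝ) - 1) * N * β * M ^ 2) ≤ Δ)
    {ξ : EuclideanSpace ℝ (Fin d)} (hξ : ξ ∈ closedBall (x i) (1 / (β * N * M))) :
    ∑ j ∈ univ.erase i, softmax (fun j => β * ⟪x j, ξ⟫) j ≤ 1 / (1 + 2 * N * β * M ^ 2) := by
  have hN1 : (0 : ℝ) < N - 1 := sub_pos.2 (by exact_mod_cast hN)
  set L := 2 * ((N : ℝ) - 1) * N * β * M ^ 2
  have hL : 0 < L := by positivity
  have hgap : L ≤ Real.exp (β * (Δ - 2 * M * (1 / (β * N * M)))) := by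
    have hβr : β * (2 * M * (1 / (β * N * M))) = 2 / N := by field_simp
    have hβsep : β * (2 / (β * N) + β⁻¹ * Real.log L) = 2 / N + Real.log L := by field_simp
    rw [← Real.log_le_iff_le_exp hL, mul_sub, hβr]
    linarith [mul_le_mul_of_nonneg_left hsep hβ.le]
  calc _ ≤ ((N : ℝ) - 1) / ((N : ℝ) - 1 + Real.exp (β * (Δ - 2 * M * (1 / (β * N * M))))) :=
        sum_erase_softmax_le_of_mem_closedBall hx hβ.le hΔ hξ
    _ ≤ ((N : ℝ) - 1) / ((N : ℝ) - 1 + L) := by gcongr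
    _ = 1 / (1 + 2 * N * β * M ^ 2) := by
        rw [div_eq_div_iff (by positivity) (by positivity)]
        ring

end Hopfield

/-- For N ≥ 2, M > 0 and a well-separated pattern x_i, i.e.
Δ_i ≥ 2/(β N) + β⁻¹ log(2 (N − 1) N β M²), there exists a fixed point x_i* of the update
rule in the closed ball of radius 1/(β N M) centered at x_i. -/
theorem wellSeparated_exists_fixedPoint
    {d N : ℕ} (hN : 2 ≤ N) (x : Fin N → EuclideanSpace ℝ (Fin d)) (β M Δ : ℝ)
    (hβ : 0 < β) (hMpos : 0 < M)
    (hM : IsGreatest (Set.range fun i => ‖x i‖) M)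
    (i : Fin N)
    (hΔ : IsLeast {v : ℝ | ∃ j, j ≠ i ∧ v = ⟪x i, x i⟫ - ⟪x i, x j⟫} Δ)
    (hsep : 2 / (β * N) + β⁻¹ * Real.log (2 * ((N : ℝ) - 1) * N * β * M ^ 2) ≤ Δ) :
    ∃ xstar : EuclideanSpace ℝ (Fin d),
      hopfieldUpdate x β xstar = xstar ∧ ‖xstar - x i‖ ≤ 1 / (β * N * M) := by
  have : NeZero N := NeZero.of_pos i.pos
  have hx : ∀ j, ‖x j‖ ≤ M := fun j => hM.2 ⟨j, rfl⟩
  have hN2 : (2 : ℝ) ≤ N := by exact_mod_cast hN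
  set r := 1 / (β * N * M)
  set s := 1 / (1 + 2 * N * β * M ^ 2)
  have hw : ∀ ξ ∈ closedBall (x i) r,
      ∑ j ∈ univ.erase i, softmax (fun j => β * ⟪x j, ξ⟫) j ≤ s := fun ξ hξ =>
    sum_erase_softmax_le_of_wellSeparated hN hx hβ hMpos (fun j hj => hΔ.2 ⟨j, hj, rfl⟩) hsep hξ
  have hsr : s * (2 * M) ≤ r := by
    rw [one_div_mul_eq_div, div_le_div_iff₀ (by positivity) (by positivity)]
    linarith
  have hK : Real.toNNReal (4 * β * M ^ 2 * s) < 1 := by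
    rw [Real.toNNReal_lt_one, mul_one_div, div_lt_one (by positivity)]
    nlinarith [mul_le_mul_of_nonneg_right hN2 (mul_pos hβ (pow_pos hMpos 2)).le]
  obtain ⟨y, hy, hfix⟩ := exists_fixedPoint_of_lipschitzOnWith isClosed_closedBall.isComplete
    ⟨x i, mem_closedBall_self (by positivity)⟩ (mapsTo_hopfieldUpdate_closedBall hx i hw hsr) hK
    (lipschitzOnWith_hopfieldUpdate hx hβ.le i (convex_closedBall _ _) hw)
  exact ⟨y, hfix, mem_closedBall_iff_norm.1 hy⟩
end
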